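/- arXiv:math/0401363 — 2 statements merged into one kernel-verified Lean document; each statement's English description precedes it below -/
import Mathlib

section
/- For every even n, λ(P_n) = n/2 and λ(C_n) = n/2, where P_n is the path with n edges and C_n is the cycle with n edges. -/
open SimpleGraph FirstOrder

namespace SymPaper

/-! ### The symmetry breaking-preserving game `Sym(G)`

Two players A and B alternately color previously uncolored edges of `G` (A red, B blue),
A moving first.  A strategy is a function of the opponent-visible history as in the paper:
A's move is a function of B's previous moves, B's move is a function of A's moves so far. -/

variable {V : Type*}

/-- `rounds S1 S2 n` is the list of pairs (A's edge, B's edge) of the first `n` rounds,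
when A follows `S1` and B follows `S2`:
`a i = S1 (b 1, …, b (i-1))` and `b i = S2 (a 1, …, a i)`. -/
def rounds (S1 S2 : List (Sym2 V) → Sym2 V) : ℕ → List (Sym2 V × Sym2 V)
  | 0 => []
  | n + 1 =>
    let prev := rounds S1 S2 n
    let a := S1 (prev.map Prod.snd)
    let b := S2 (prev.map Prod.fst ++ [a])
    prev ++ [(a, b)]

/-- The subgraph (of the ambient vertex set) formed by a list of edges. -/
def graphOf (L : List (Sym2 V)) : SimpleGraph V :=
  SimpleGraph.fromEdgeSet {e | e ∈ L}

/-- The red and the blue subgraphs are isomorphic after round `i`. -/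
def isoAt (S1 S2 : List (Sym2 V) → Sym2 V) (i : ℕ) : Prop :=
  Nonempty (graphOf ((rounds S1 S2 i).map Prod.fst) ≃g graphOf ((rounds S1 S2 i).map Prod.snd))

/-- A strategy for player A: a function mapping every sequence of pairwise distinct
edges to an edge different from them and from all of its own values on prefixes
(required whenever such a fresh edge exists, i.e. `2·i + 1 ≤ |E(G)|`). -/
structure AStrategy (G : SimpleGraph V) where
  move : List (Sym2 V) → Sym2 V
  valid : ∀ L : List (Sym2 V), L.Nodup → (∀ e ∈ L, e ∈ G.edgeSet) →
    2 * L.length + 1 ≤ G.edgeSet.ncard →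
    move L ∈ G.edgeSet ∧ move L ∉ L ∧
      ∀ L' : List (Sym2 V), L' <+: L → L' ≠ L → move L' ≠ move L

/-- A strategy for player B: defined analogously on nonempty sequences. -/
structure BStrategy (G : SimpleGraph V) where
  move : List (Sym2 V) → Sym2 V
  valid : ∀ L : List (Sym2 V), L ≠ [] → L.Nodup → (∀ e ∈ L, e ∈ G.edgeSet) →
    2 * L.length ≤ G.edgeSet.ncard →
    move L ∈ G.edgeSet ∧ move L ∉ L ∧
      ∀ L' : List (Sym2 V), L' ≠ [] → L' <+: L → L' ≠ L → move L' ≠ move L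

/-- `l(S1,S2)`: the maximum `l` (at most the total number `⌊|E(G)|/2⌋` of rounds)
such that the red and blue subgraphs are isomorphic after every round `i ≤ l`. -/
noncomputable def playLength (G : SimpleGraph V) (S1 S2 : List (Sym2 V) → Sym2 V) : ℕ :=
  sSup {l : ℕ | l ≤ G.edgeSet.ncard / 2 ∧ ∀ i ≤ l, isoAt S1 S2 i}

/-- `λ(G) = max_{S2} min_{S1} l(S1,S2)`, the length of the game `Sym(G)`. -/
noncomputable def symLen (G : SimpleGraph V) : ℕ :=
  ⨆ S2 : BStrategy G, ⨅ S1 : AStrategy G, playLength G S1.move S2.move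

/-- `λ̃(G) = min_{S1} max_{S2} l(S1,S2)`. -/
noncomputable def symLenTilde (G : SimpleGraph V) : ℕ :=
  ⨅ S1 : AStrategy G, ⨆ S2 : BStrategy G, playLength G S1.move S2.move

/-! ### The Ehrenfeucht–Fraïssé game `EF(G0,G1)`

Vertex-disjointness is modelled by taking two different vertex types.  In each round the
spoiler (player A) picks a vertex of either graph and the duplicator (player B) answers with
a vertex of the other graph, so each round produces a pair in `V0 × V1`. -/

variable {V0 V1 : Type*}

/-- A duplicator strategy: given the history of pairs and the spoiler's pick
(a vertex of `G0` or of `G1`), produce the pair for this round; the spoiler's pick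
must be the corresponding component of the pair. -/
structure DStrategy (V0 V1 : Type*) where
  resp : List (V0 × V1) → V0 ⊕ V1 → V0 × V1
  resp_left : ∀ L u, (resp L (Sum.inl u)).1 = u
  resp_right : ∀ L w, (resp L (Sum.inr w)).2 = w

/-- The list of pairs of vertices chosen in the first `n` rounds when the duplicator
follows `D` and the spoiler follows `σ`. -/
def efRounds (D : DStrategy V0 V1) (σ : List (V0 × V1) → V0 ⊕ V1) : ℕ → List (V0 × V1)
  | 0 => []
  | n + 1 =>
    let prev := efRounds D σ n
    prev ++ [D.resp prev (σ prev)]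

/-- The chosen pairs form a partial isomorphism between `G0` and `G1`, i.e.
an isomorphism between the subgraphs induced by the chosen vertices. -/
def PartialIso (G0 : SimpleGraph V0) (G1 : SimpleGraph V1) (L : List (V0 × V1)) : Prop :=
  ∀ p ∈ L, ∀ q ∈ L, (p.1 = q.1 ↔ p.2 = q.2) ∧ (G0.Adj p.1 q.1 ↔ G1.Adj p.2 q.2)

/-- The duplicator can survive `k` rounds of `EF(G0,G1)` whatever the spoiler does. -/
def DuplicatorWins (G0 : SimpleGraph V0) (G1 : SimpleGraph V1) (k : ℕ) : Prop :=
  ∃ D : DStrategy V0 V1, ∀ σ : List (V0 × V1) → V0 ⊕ V1, PartialIso G0 G1 (efRounds D σ k)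

/-- `l_EF(G0,G1)`: the maximum number of rounds during which the duplicator, playing
optimally, survives irrespective of the spoiler's strategy (possibly `⊤`). -/
noncomputable def lEF (G0 : SimpleGraph V0) (G1 : SimpleGraph V1) : ℕ∞ :=
  sSup {k : ℕ∞ | ∃ m : ℕ, DuplicatorWins G0 G1 m ∧ k = (m : ℕ∞)}

/-- The canonical embedding of `ℕ∞` into the extended reals. -/
noncomputable def enatToEReal : ℕ∞ → EReal
  | none => ⊤
  | some m => ((m : ℝ) : EReal)

/-! ### Line graphs, paths, cycles -/

/-- The line graph `L(G)`: vertices are the edges of `G`, two of them adjacent iff they are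
distinct and share a vertex of `G`. -/
def lineG (G : SimpleGraph V) : SimpleGraph G.edgeSet where
  Adj e f := e ≠ f ∧ ∃ v : V, v ∈ (e : Sym2 V) ∧ v ∈ (f : Sym2 V)
  symm := by
    constructor
    rintro e f ⟨hne, v, hv, hw⟩
    exact ⟨hne.symm, v, hw, hv⟩
  loopless := by
    constructor
    rintro e ⟨hne, -⟩
    exact hne rfl

/-- `P n`: the path with `n` edges (on `n+1` vertices). -/
abbrev pathG (n : ℕ) : SimpleGraph (Fin (n + 1)) := SimpleGraph.pathGraph (n + 1)

/-- `C n`: the cycle with `n` edges (on `n` vertices); meaningful for `n ≥ 3`. -/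
abbrev cycleG (n : ℕ) : SimpleGraph (Fin n) := SimpleGraph.cycleGraph n

/-! ### Counting quantifiers of first-order formulas -/

/-- The number of quantifier occurrences in a first-order formula. -/
def quantCount {L : Language} {α : Type*} : ∀ {n : ℕ}, L.BoundedFormula α n → ℕ
  | _, .falsum => 0
  | _, .equal _ _ => 0
  | _, .rel _ _ => 0
  | _, .imp f g => quantCount f + quantCount g
  | _, .all f => quantCount f + 1


/-! ### Auxiliary development for the proof -/

set_option linter.unusedSectionVars false

section Aux

variable [Fintype V] [DecidableEq V] [Nonempty V]

noncomputable instance sym2Nonempty : Nonempty (Sym2 V) :=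
  ⟨s(Classical.ofNonempty, Classical.ofNonempty)⟩

open Classical in
/-- an arbitrary edge of `G` avoiding the finite forbidden list `F`, when one exists. -/
noncomputable def freshEdge (G : SimpleGraph V) (F : List (Sym2 V)) : Sym2 V :=
  if h : (G.edgeSet \ {e | e ∈ F}).Nonempty then h.choose else Classical.ofNonempty

theorem freshEdge_spec (G : SimpleGraph V) (F : List (Sym2 V))
    (h : F.length < G.edgeSet.ncard) :
    freshEdge G F ∈ G.edgeSet ∧ freshEdge G F ∉ F := by
  have hne : (G.edgeSet \ {e | e ∈ F}).Nonempty := by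
    by_contra hc
    rw [Set.not_nonempty_iff_eq_empty, Set.diff_eq_empty] at hc
    have hFset : ({e | e ∈ F} : Set (Sym2 V)) = ↑F.toFinset := by ext e; simp
    have h1 : G.edgeSet.ncard ≤ ({e | e ∈ F} : Set (Sym2 V)).ncard :=
      Set.ncard_le_ncard hc (by rw [hFset]; exact (F.toFinset : Finset (Sym2 V)).finite_toSet)
    have h2 : ({e | e ∈ F} : Set (Sym2 V)).ncard ≤ F.length := by
      rw [hFset, Set.ncard_coe_finset]; exact F.toFinset_card_le
    omega
  rw [freshEdge, dif_pos hne]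
  exact ⟨hne.choose_spec.1, hne.choose_spec.2⟩

/-- values of the greedy A-strategy on all prefixes of the reversed history. -/
noncomputable def aVals (G : SimpleGraph V) : List (Sym2 V) → List (Sym2 V)
  | [] => [freshEdge G ([])]
  | a :: rest => freshEdge G (a :: rest ++ aVals G rest) :: aVals G rest

noncomputable def aMove (G : SimpleGraph V) (L : List (Sym2 V)) : Sym2 V :=
  (aVals G L.reverse).headD (freshEdge G [])

open Classical in
/-- values of the mirror B-strategy (w.r.t. edge map ψ). -/
noncomputable def bVals (G : SimpleGraph V) (ψ : Sym2 V → Sym2 V) :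
    List (Sym2 V) → List (Sym2 V)
  | [] => []
  | a :: rest =>
    (if ψ a ∈ G.edgeSet ∧ ψ a ∉ (a :: rest ++ bVals G ψ rest)
     then ψ a else freshEdge G (a :: rest ++ bVals G ψ rest)) :: bVals G ψ rest

noncomputable def bMove (G : SimpleGraph V) (ψ : Sym2 V → Sym2 V) (L : List (Sym2 V)) : Sym2 V :=
  (bVals G ψ L.reverse).headD (freshEdge G [])

theorem aVals_length (G : SimpleGraph V) (r : List (Sym2 V)) :
    (aVals G r).length = r.length + 1 := by
  induction r with
  | nil => rfl
  | cons a rest ih => simp [aVals, ih]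

theorem bVals_length (G : SimpleGraph V) (ψ : Sym2 V → Sym2 V) (r : List (Sym2 V)) :
    (bVals G ψ r).length = r.length := by
  induction r with
  | nil => rfl
  | cons a rest ih => simp [bVals, ih]

theorem aVals_suffix (G : SimpleGraph V) {s r : List (Sym2 V)} (h : s <:+ r) :
    aVals G s <:+ aVals G r := by
  induction r with
  | nil => rw [List.suffix_nil.mp h]
  | cons a rest ih =>
    rcases List.suffix_cons_iff.mp h with h | h
    · rw [h]
    · exact (ih h).trans (List.suffix_cons _ _)

theorem bVals_suffix (G : SimpleGraph V) (ψ : Sym2 V → Sym2 V) {s r : List (Sym2 V)}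
    (h : s <:+ r) : bVals G ψ s <:+ bVals G ψ r := by
  induction r with
  | nil => rw [List.suffix_nil.mp h]
  | cons a rest ih =>
    rcases List.suffix_cons_iff.mp h with h | h
    · rw [h]
    · exact (ih h).trans (List.suffix_cons _ _)

theorem headD_mem_of_suffix {α : Type*} {s r : List α} (h : s <:+ r) (hs : s ≠ []) (d : α) :
    s.headD d ∈ r := by
  cases s with
  | nil => exact absurd rfl hs
  | cons x xs => exact h.subset (by simp)

theorem aMove_spec (G : SimpleGraph V) (L : List (Sym2 V))
    (hcard : 2 * L.length + 1 ≤ G.edgeSet.ncard) :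
    aMove G L ∈ G.edgeSet ∧ aMove G L ∉ L ∧
      ∀ L' : List (Sym2 V), L' <+: L → L' ≠ L → aMove G L' ≠ aMove G L := by
  rcases List.eq_nil_or_concat L with rfl | ⟨M, a, rfl⟩
  · have h := freshEdge_spec G [] (Nat.lt_of_lt_of_le (by simp) hcard)
    refine ⟨h.1, by simp, ?_⟩
    intro L' h1 h2
    exact absurd (List.prefix_nil.mp h1) h2
  · simp only [List.concat_eq_append] at hcard ⊢
    have hrev : (M ++ [a]).reverse = a :: M.reverse := by simp
    set F := a :: M.reverse ++ aVals G M.reverse with hF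
    have hFlen : F.length < G.edgeSet.ncard := by
      simp only [hF, List.length_append, List.length_cons, List.length_reverse,
        aVals_length, bVals_length] at *
      omega
    have hfe := freshEdge_spec G F hFlen
    have hmove : aMove G (M ++ [a]) = freshEdge G F := by
      rw [aMove, hrev, aVals, List.headD_cons]
    refine ⟨hmove ▸ hfe.1, ?_, ?_⟩
    · rw [hmove]
      intro hmem
      exact hfe.2 (by
        simp only [hF, List.mem_append, List.mem_cons, List.mem_reverse]
        rcases List.mem_append.mp hmem with h | h
        · exact Or.inl (Or.inr h)
        · exact Or.inl (Or.inl (by simpa [hF] using h)))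
    · intro L' h1 h2
      rw [hmove]
      have hsuf : L'.reverse <:+ M.reverse := by
        have : L'.reverse <:+ (M ++ [a]).reverse := List.reverse_suffix.mpr h1
        rw [hrev] at this
        rcases List.suffix_cons_iff.mp this with h | h
        · exact absurd (by rw [← List.reverse_reverse L', h]; simp) h2
        · exact h
      have h3 : aVals G L'.reverse <:+ aVals G M.reverse := aVals_suffix G hsuf
      have h4 : aMove G L' ∈ aVals G M.reverse := by
        apply headD_mem_of_suffix h3
        intro hc
        have := aVals_length G L'.reverse
        rw [hc] at this
        simp at this
      intro hc
      exact hfe.2 (by rw [← hc, hF]; exact List.mem_append.mpr (Or.inr h4))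

theorem bVals_head_spec (G : SimpleGraph V) (ψ : Sym2 V → Sym2 V) (a : Sym2 V)
    (rest : List (Sym2 V)) (hcard : (a :: rest ++ bVals G ψ rest).length < G.edgeSet.ncard) :
    ∃ c, bVals G ψ (a :: rest) = c :: bVals G ψ rest ∧ c ∈ G.edgeSet ∧
      c ∉ (a :: rest ++ bVals G ψ rest) := by
  rw [bVals]
  split
  · next h => exact ⟨ψ a, rfl, h.1, h.2⟩
  · next h => exact ⟨_, rfl, (freshEdge_spec G _ hcard).1, (freshEdge_spec G _ hcard).2⟩

theorem bMove_spec (G : SimpleGraph V) (L : List (Sym2 V)) (ψ : Sym2 V → Sym2 V)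
    (hne : L ≠ []) (hcard : 2 * L.length ≤ G.edgeSet.ncard) :
    bMove G ψ L ∈ G.edgeSet ∧ bMove G ψ L ∉ L ∧
      ∀ L' : List (Sym2 V), L' ≠ [] → L' <+: L → L' ≠ L → bMove G ψ L' ≠ bMove G ψ L := by
  rcases List.eq_nil_or_concat L with rfl | ⟨M, a, rfl⟩
  · exact absurd rfl hne
  · simp only [List.concat_eq_append] at hcard ⊢
    have hrev : (M ++ [a]).reverse = a :: M.reverse := by simp
    have hFlen : (a :: M.reverse ++ bVals G ψ M.reverse).length < G.edgeSet.ncard := by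
      simp only [List.length_append, List.length_cons, List.length_reverse,
        bVals_length] at *
      omega
    obtain ⟨c, hc, hce, hcf⟩ := bVals_head_spec G ψ a M.reverse hFlen
    have hmove : bMove G ψ (M ++ [a]) = c := by rw [bMove, hrev, hc, List.headD_cons]
    refine ⟨hmove ▸ hce, ?_, ?_⟩
    · rw [hmove]
      intro hmem
      exact hcf (by
        simp only [List.mem_append, List.mem_cons, List.mem_reverse]
        rcases List.mem_append.mp hmem with h | h
        · exact Or.inl (Or.inr h)
        · exact Or.inl (Or.inl (by simpa using h)))
    · intro L' hne' h1 h2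
      rw [hmove]
      have hsuf : L'.reverse <:+ M.reverse := by
        have : L'.reverse <:+ (M ++ [a]).reverse := List.reverse_suffix.mpr h1
        rw [hrev] at this
        rcases List.suffix_cons_iff.mp this with h | h
        · exact absurd (by rw [← List.reverse_reverse L', h]; simp) h2
        · exact h
      have h3 : bVals G ψ L'.reverse <:+ bVals G ψ M.reverse := bVals_suffix G ψ hsuf
      have h4 : bMove G ψ L' ∈ bVals G ψ M.reverse := by
        apply headD_mem_of_suffix h3
        intro hcnil
        have := bVals_length G ψ L'.reverse
        rw [hcnil] at this
        simp only [List.length_nil, List.length_reverse] at this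
        exact hne' (List.length_eq_zero_iff.mp this.symm)
      intro hcon
      exact hcf (by rw [← hcon]; exact List.mem_append.mpr (Or.inr h4))

/-- The greedy A-strategy. -/
noncomputable def greedyA (G : SimpleGraph V) : AStrategy G where
  move := aMove G
  valid := fun L _ _ hc => aMove_spec G L hc

/-- The mirror B-strategy w.r.t. the edge map `ψ`. -/
noncomputable def mirrorB (G : SimpleGraph V) (ψ : Sym2 V → Sym2 V) : BStrategy G where
  move := bMove G ψ
  valid := fun L hne _ _ hc => bMove_spec G L ψ hne hc

end Aux
section Game

variable [Fintype V] [DecidableEq V] [Nonempty V]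

theorem rounds_succ (S1 S2 : List (Sym2 V) → Sym2 V) (i : ℕ) :
    rounds S1 S2 (i + 1) = rounds S1 S2 i ++
      [(S1 ((rounds S1 S2 i).map Prod.snd),
        S2 ((rounds S1 S2 i).map Prod.fst ++ [S1 ((rounds S1 S2 i).map Prod.snd)]))] := rfl

theorem rounds_length (S1 S2 : List (Sym2 V) → Sym2 V) (i : ℕ) :
    (rounds S1 S2 i).length = i := by
  induction i with
  | zero => rfl
  | succ i ih => rw [rounds_succ]; simp [ih]

theorem isoAt_zero (S1 S2 : List (Sym2 V) → Sym2 V) : isoAt S1 S2 0 := by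
  unfold isoAt rounds
  simp only [List.map_nil]
  exact ⟨⟨Equiv.refl V, Iff.rfl⟩⟩

theorem graphOf_map_iso (f : V ≃ V) (L : List (Sym2 V)) :
    Nonempty (graphOf L ≃g graphOf (L.map (Sym2.map f))) := by
  refine ⟨⟨f, ?_⟩⟩
  intro a b
  simp only [graphOf, SimpleGraph.fromEdgeSet_adj, Set.mem_setOf_eq, Equiv.coe_fn_mk]
  rw [← Sym2.map_pair_eq, List.mem_map_of_injective (Sym2.map.injective f.injective),
    (f.injective.ne_iff)]

variable {G : SimpleGraph V} (φ : G ≃g G)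

theorem psi_involutive (hinv : Function.Involutive ⇑φ) :
    Function.Involutive (Sym2.map ⇑φ) := fun e => by
  rw [Sym2.map_map, hinv.comp_self, Sym2.map_id, id_eq]

theorem play_inv (hinv : Function.Involutive ⇑φ)
    (hfix : ∀ e ∈ G.edgeSet, Sym2.map ⇑φ e ≠ e)
    (S1 : AStrategy G) (i : ℕ) (hi : 2 * i ≤ G.edgeSet.ncard) :
    ((rounds S1.move (bMove G (Sym2.map ⇑φ)) i).map Prod.snd
        = ((rounds S1.move (bMove G (Sym2.map ⇑φ)) i).map Prod.fst).map (Sym2.map ⇑φ)) ∧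
      (((rounds S1.move (bMove G (Sym2.map ⇑φ)) i).map Prod.fst)
        ++ ((rounds S1.move (bMove G (Sym2.map ⇑φ)) i).map Prod.snd)).Nodup ∧
      (∀ e ∈ ((rounds S1.move (bMove G (Sym2.map ⇑φ)) i).map Prod.fst)
        ++ ((rounds S1.move (bMove G (Sym2.map ⇑φ)) i).map Prod.snd), e ∈ G.edgeSet) ∧
      bVals G (Sym2.map ⇑φ) (((rounds S1.move (bMove G (Sym2.map ⇑φ)) i).map Prod.fst).reverse)
        = ((rounds S1.move (bMove G (Sym2.map ⇑φ)) i).map Prod.snd).reverse ∧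
      ∀ e ∈ (rounds S1.move (bMove G (Sym2.map ⇑φ)) i).map Prod.fst,
        ∃ L', L' <+: (rounds S1.move (bMove G (Sym2.map ⇑φ)) i).map Prod.snd ∧
          L'.length < i ∧ e = S1.move L' := by
  set ψ := Sym2.map ⇑φ with hψ
  have hψinv : Function.Involutive ψ := psi_involutive φ hinv
  induction i with
  | zero => simp [rounds, bVals]
  | succ i IH =>
    obtain ⟨h1, h2, h3, h4, h5⟩ := IH (by omega)
    set R := (rounds S1.move (bMove G ψ) i).map Prod.fst with hR
    set Bl := (rounds S1.move (bMove G ψ) i).map Prod.snd with hBl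
    have hlenR : R.length = i := by rw [hR, List.length_map, rounds_length]
    have hlenB : Bl.length = i := by rw [hBl, List.length_map, rounds_length]
    set a := S1.move Bl with ha
    set b := bMove G ψ (R ++ [a]) with hb
    have hnext : (rounds S1.move (bMove G ψ) (i + 1)).map Prod.fst = R ++ [a] ∧
        (rounds S1.move (bMove G ψ) (i + 1)).map Prod.snd = Bl ++ [b] := by
      rw [rounds_succ]
      constructor <;> simp [hR, hBl, ha, hb]
    -- A's move is legal
    obtain ⟨haE, haB, haP⟩ := S1.valid Bl (h2.of_append_right)
      (fun e he => h3 e (List.mem_append_right _ he)) (by omega)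
    have haR : a ∉ R := by
      intro hmem
      obtain ⟨L', hp, hlt, heq⟩ := h5 a hmem
      exact haP L' hp (fun hc => by rw [hc] at hlt; omega) heq.symm
    -- facts about ψ a
    have hψaE : ψ a ∈ G.edgeSet := φ.map_mem_edgeSet_iff.mpr haE
    have hψane : ψ a ≠ a := hfix a haE
    have hψaR : ψ a ∉ R := by
      intro hmem
      have hmem2 : a ∈ Bl := by
        rw [h1]
        have h' : ψ (ψ a) ∈ R.map ψ := List.mem_map_of_mem (f := ψ) hmem
        rwa [hψinv a] at h'
      exact haB hmem2
    have hψaB : ψ a ∉ Bl := by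
      intro hmem
      rw [h1] at hmem
      obtain ⟨e, he, heq⟩ := List.mem_map.mp hmem
      rw [hψinv.injective heq] at he
      exact haR he
    -- B's reply is the mirror move
    have hbval : bVals G ψ ((R ++ [a]).reverse) = ψ a :: Bl.reverse := by
      rw [List.reverse_append, List.reverse_singleton, List.singleton_append, bVals, h4]
      rw [if_pos]
      refine ⟨hψaE, ?_⟩
      simp only [List.mem_cons, List.mem_append, List.mem_reverse]
      push_neg
      exact ⟨⟨hψane, hψaR⟩, hψaB⟩
    have hbmir : b = ψ a := by
      rw [hb, bMove, hbval, List.headD_cons]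
    rw [hnext.1, hnext.2, hbmir]
    have hanotin : ∀ x ∈ R ++ Bl, x ≠ a := by
      intro x hx hc
      rcases List.mem_append.mp hx with h | h
      · exact haR (show a ∈ R from hc ▸ h)
      · exact haB (show a ∈ Bl from hc ▸ h)
    have hψanotin : ∀ x ∈ R ++ Bl, x ≠ ψ a := by
      intro x hx hc
      rcases List.mem_append.mp hx with h | h
      · exact hψaR (show ψ a ∈ R from hc ▸ h)
      · exact hψaB (show ψ a ∈ Bl from hc ▸ h)
    refine ⟨?_, ?_, ?_, ?_, ?_⟩
    · rw [h1]; simp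
    · -- Nodup
      have hperm : ((R ++ [a]) ++ (Bl ++ [ψ a])).Perm ((R ++ Bl) ++ [a, ψ a]) := by
        refine List.perm_iff_count.mpr fun x => ?_
        simp only [List.count_append, List.count_cons, List.count_nil]
        omega
      refine hperm.nodup_iff.mpr ?_
      rw [List.nodup_append]
      refine ⟨h2, by simp [hψane.symm], ?_⟩
      intro x hx y hmem hxy
      rw [← hxy] at hmem
      rcases List.mem_cons.mp hmem with hc | hmem'
      · exact hanotin x hx hc
      · rcases List.mem_cons.mp hmem' with hc | hmem''
        · exact hψanotin x hx hc
        · simp at hmem''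
    · intro e he
      rcases List.mem_append.mp he with h | h
      · rcases List.mem_append.mp h with h | h
        · exact h3 e (List.mem_append_left _ h)
        · rw [List.mem_singleton.mp h]; exact haE
      · rcases List.mem_append.mp h with h | h
        · exact h3 e (List.mem_append_right _ h)
        · rw [List.mem_singleton.mp h]; exact hψaE
    · rw [hbval]; simp
    · intro e he
      rcases List.mem_append.mp he with h | h
      · obtain ⟨L', hp, hlt, heq⟩ := h5 e h
        exact ⟨L', hp.trans (List.prefix_append _ _), by omega, heq⟩
      · rw [List.mem_singleton.mp h]
        exact ⟨Bl, List.prefix_append _ _, by omega, rfl⟩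

theorem isoAt_mirror (hinv : Function.Involutive ⇑φ)
    (hfix : ∀ e ∈ G.edgeSet, Sym2.map ⇑φ e ≠ e)
    (S1 : AStrategy G) (i : ℕ) (hi : 2 * i ≤ G.edgeSet.ncard) :
    isoAt S1.move (bMove G (Sym2.map ⇑φ)) i := by
  have h1 := (play_inv φ hinv hfix S1 i hi).1
  rw [isoAt, h1]
  exact graphOf_map_iso φ.toEquiv _

end Game
section Len

variable [Fintype V] [DecidableEq V] [Nonempty V]

theorem playLength_le (G : SimpleGraph V) (S1 S2 : List (Sym2 V) → Sym2 V) :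
    playLength G S1 S2 ≤ G.edgeSet.ncard / 2 := by
  refine csSup_le ⟨0, Nat.zero_le _, fun i hi => ?_⟩ fun x hx => hx.1
  rw [Nat.le_zero.mp hi]
  exact isoAt_zero S1 S2

theorem playLength_mirror {G : SimpleGraph V} (φ : G ≃g G)
    (hinv : Function.Involutive ⇑φ) (hfix : ∀ e ∈ G.edgeSet, Sym2.map ⇑φ e ≠ e)
    (S1 : AStrategy G) :
    playLength G S1.move (bMove G (Sym2.map ⇑φ)) = G.edgeSet.ncard / 2 := by
  refine le_antisymm (playLength_le G _ _) ?_
  refine le_csSup ⟨G.edgeSet.ncard / 2, fun x hx => hx.1⟩ ?_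
  exact ⟨le_refl _, fun i hi => isoAt_mirror φ hinv hfix S1 i (by omega)⟩

theorem symLen_eq {G : SimpleGraph V} (φ : G ≃g G) (hinv : Function.Involutive ⇑φ)
    (hfix : ∀ e ∈ G.edgeSet, Sym2.map ⇑φ e ≠ e) :
    symLen G = G.edgeSet.ncard / 2 := by
  have hA : Nonempty (AStrategy G) := ⟨greedyA G⟩
  have hB : Nonempty (BStrategy G) := ⟨mirrorB G (Sym2.map ⇑φ)⟩
  have hub : ∀ S2 : BStrategy G,
      (⨅ S1 : AStrategy G, playLength G S1.move S2.move) ≤ G.edgeSet.ncard / 2 :=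
    fun S2 => (ciInf_le (OrderBot.bddBelow _) (greedyA G)).trans (playLength_le G _ _)
  refine le_antisymm (ciSup_le hub) ?_
  have hmb : (⨅ S1 : AStrategy G, playLength G S1.move (mirrorB G (Sym2.map ⇑φ)).move)
      = G.edgeSet.ncard / 2 := by
    have h : ∀ S1 : AStrategy G, playLength G S1.move (mirrorB G (Sym2.map ⇑φ)).move
        = G.edgeSet.ncard / 2 := fun S1 => playLength_mirror φ hinv hfix S1
    simp only [h]
    exact ciInf_const
  rw [← hmb]
  exact le_ciSup ⟨G.edgeSet.ncard / 2, by rintro x ⟨S2, rfl⟩; exact hub S2⟩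
    (mirrorB G (Sym2.map ⇑φ))

end Len
section Graphs

/-- The reversal automorphism of the path. -/
def pathRevIso (n : ℕ) : pathG n ≃g pathG n where
  toEquiv := Fin.revPerm
  map_rel_iff' := by
    intro a b
    have ha := a.isLt
    have hb := b.isLt
    simp only [Fin.revPerm_apply, pathGraph_adj, Fin.val_rev]
    omega

theorem pathRev_involutive (n : ℕ) : Function.Involutive ⇑(pathRevIso n) :=
  fun x => Fin.rev_rev x

theorem pathRev_fix (n : ℕ) (hn : Even n) :
    ∀ e ∈ (pathG n).edgeSet, Sym2.map ⇑(pathRevIso n) e ≠ e := by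
  intro e he
  induction e using Sym2.ind with
  | _ u v =>
    rw [SimpleGraph.mem_edgeSet, pathGraph_adj] at he
    obtain ⟨k, hk⟩ := hn
    have hu := u.isLt
    have hv := v.isLt
    intro hc
    rw [show ⇑(pathRevIso n) = Fin.rev from rfl, Sym2.map_pair_eq, Sym2.eq_iff] at hc
    rcases hc with ⟨h1, h2⟩ | ⟨h1, h2⟩ <;>
      rw [Fin.ext_iff] at h1 h2 <;>
      simp only [Fin.val_rev] at h1 h2 <;> omega

theorem pathG_ncard (n : ℕ) : (pathG n).edgeSet.ncard = n := by
  have hbij : Function.Bijective (fun i : Fin n =>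
      (⟨s(i.castSucc, i.succ), by
        rw [SimpleGraph.mem_edgeSet, pathGraph_adj]
        left
        simp⟩ : (pathG n).edgeSet)) := by
    constructor
    · intro i j hij
      have hsym := Subtype.ext_iff.mp hij
      rw [Sym2.eq_iff] at hsym
      have hi := i.isLt
      have hj := j.isLt
      rcases hsym with ⟨h1, _⟩ | ⟨h1, h2⟩
      · exact Fin.ext (by simpa [Fin.ext_iff] using h1)
      · rw [Fin.ext_iff] at h1 h2
        simp only [Fin.coe_castSucc, Fin.val_succ] at h1 h2
        exact Fin.ext (by omega)
    · rintro ⟨e, he⟩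
      induction e using Sym2.ind with
      | _ u v =>
        rw [SimpleGraph.mem_edgeSet, pathGraph_adj] at he
        have hu := u.isLt
        have hv := v.isLt
        rcases he with h | h
        · refine ⟨⟨u.val, by omega⟩, Subtype.ext ?_⟩
          rw [Sym2.eq_iff]
          left
          constructor <;> apply Fin.ext <;> simp <;> omega
        · refine ⟨⟨v.val, by omega⟩, Subtype.ext ?_⟩
          rw [Sym2.eq_iff]
          right
          constructor <;> apply Fin.ext <;> simp <;> omega
  rw [← Nat.card_coe_set_eq, Nat.card_congr (Equiv.ofBijective _ hbij).symm,
    Nat.card_eq_fintype_card, Fintype.card_fin]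

/-- The half-rotation automorphism of the even cycle. -/
def cycleRotIso (m : ℕ) : cycleG (2*m+4) ≃g cycleG (2*m+4) where
  toEquiv := Equiv.addRight (⟨m+2, by omega⟩ : Fin (2*m+4))
  map_rel_iff' := by
    intro a b
    simp only [Equiv.coe_addRight]
    rw [cycleGraph_adj', cycleGraph_adj', add_sub_add_right_eq_sub, add_sub_add_right_eq_sub]

theorem cycleRot_c2 (m : ℕ) :
    (⟨m+2, by omega⟩ : Fin (2*m+4)) + ⟨m+2, by omega⟩ = 0 := by
  apply Fin.ext
  rw [Fin.add_def]
  show (m + 2 + (m + 2)) % (2*m+4) = 0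
  rw [show m + 2 + (m + 2) = 2*m+4 by ring, Nat.mod_self]

theorem cycleRot_involutive (m : ℕ) : Function.Involutive ⇑(cycleRotIso m) := by
  intro x
  have h : ∀ y : Fin (2*m+4), (cycleRotIso m) y = y + ⟨m+2, by omega⟩ := fun _ => rfl
  rw [h, h, add_assoc, cycleRot_c2, add_zero]

theorem cycleRot_fix (m : ℕ) :
    ∀ e ∈ (cycleG (2*m+4)).edgeSet, Sym2.map ⇑(cycleRotIso m) e ≠ e := by
  intro e he
  set c : Fin (2*m+4) := ⟨m+2, by omega⟩ with hcdef
  induction e using Sym2.ind with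
  | _ u v =>
    rw [SimpleGraph.mem_edgeSet, cycleGraph_adj'] at he
    intro hc
    rw [show ⇑(cycleRotIso m) = (· + c) from rfl, Sym2.map_pair_eq, Sym2.eq_iff] at hc
    have hcval : c.val = m + 2 := rfl
    rcases hc with ⟨h1, _⟩ | ⟨h1, h2⟩
    · have h0 : c = 0 := by
        have := add_eq_left.mp h1
        exact this
      have := congrArg Fin.val h0
      rw [hcval] at this
      simp at this
    · have hvu : v - u = c := by rw [← h1, add_sub_cancel_left]
      have huv : u - v = c := by rw [← h2, add_sub_cancel_left]
      rw [hvu, huv, hcval] at he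
      rcases he with h | h <;> omega

theorem cycleG_ncard (m : ℕ) : (cycleG (2*m+4)).edgeSet.ncard = 2*m+4 := by
  have hone : ((1 : Fin (2*m+4)) : ℕ) = 1 := by
    haveI : NeZero (2*m+4) := ⟨by omega⟩
    rw [Fin.val_one']
    exact Nat.mod_eq_of_lt (by omega)
  have hbij : Function.Bijective (fun i : Fin (2*m+4) =>
      (⟨s(i, i+1), by
        rw [SimpleGraph.mem_edgeSet, cycleGraph_adj']
        right
        rw [add_sub_cancel_left]
        exact hone⟩ : (cycleG (2*m+4)).edgeSet)) := by
    constructor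
    · intro i j hij
      have hsym := Subtype.ext_iff.mp hij
      rw [Sym2.eq_iff] at hsym
      rcases hsym with ⟨h1, _⟩ | ⟨h1, h2⟩
      · exact h1
      · exfalso
        have h3 : j + (1 + 1) = j := by
          rw [← add_assoc, ← h1, h2]
        have h4 := add_eq_left.mp h3
        have h5 := congrArg Fin.val h4
        rw [Fin.val_add, hone, Fin.val_zero, Nat.mod_eq_of_lt (by omega)] at h5
        omega
    · rintro ⟨e, he⟩
      induction e using Sym2.ind with
      | _ u v =>
        rw [SimpleGraph.mem_edgeSet, cycleGraph_adj'] at he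
        rcases he with h | h
        · refine ⟨v, Subtype.ext ?_⟩
          have h1 : u - v = 1 := by apply Fin.ext; rw [hone]; exact h
          have huv : u = v + 1 := by rw [sub_eq_iff_eq_add.mp h1]; exact add_comm 1 v
          show s(v, v + 1) = s(u, v)
          rw [huv]
          exact Sym2.eq_swap
        · refine ⟨u, Subtype.ext ?_⟩
          have h1 : v - u = 1 := by apply Fin.ext; rw [hone]; exact h
          have hvu : v = u + 1 := by rw [sub_eq_iff_eq_add.mp h1]; exact add_comm 1 u
          show s(u, u + 1) = s(u, v)
          rw [hvu]
  rw [← Nat.card_coe_set_eq, Nat.card_congr (Equiv.ofBijective _ hbij).symm,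
    Nat.card_eq_fintype_card, Fintype.card_fin]

end Graphs

/-- For every even `n`, `λ(P n) = n/2` and `λ(C n) = n/2`
(the cycle `C n` with `n` edges existing for `n ≥ 3`). -/
theorem statement2 (n : ℕ) (hn : Even n) :
    symLen (pathG n) = n / 2 ∧ (3 ≤ n → symLen (cycleG n) = n / 2) := by
  constructor
  · rw [symLen_eq (pathRevIso n) (pathRev_involutive n) (pathRev_fix n hn), pathG_ncard]
  · intro h3
    obtain ⟨m, rfl⟩ : ∃ m, n = 2*m+4 := by
      obtain ⟨k, hk⟩ := hn
      exact ⟨k - 2, by omega⟩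
    rw [symLen_eq (cycleRotIso m) (cycleRot_involutive m) (cycleRot_fix m), cycleG_ncard]

end SymPaper
end

section
/- For every n ≥ 1, the length of the Ehrenfeucht–Fraïssé game on the paths P_n and P_{n+1} satisfies log n − 2 < l_EF(P_n, P_{n+1}) < log n + 2. -/
open SimpleGraph FirstOrder

namespace SymPaper

/-! ### The symmetry breaking-preserving game `Sym(G)`

Two players A and B alternately color previously uncolored edges of `G` (A red, B blue),
A moving first.  A strategy is a function of the opponent-visible history as in the paper:
A's move is a function of B's previous moves, B's move is a function of A's moves so far. -/

variable {V : Type*}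

/-! ### The Ehrenfeucht–Fraïssé game `EF(G0,G1)`

Vertex-disjointness is modelled by taking two different vertex types.  In each round the
spoiler (player A) picks a vertex of either graph and the duplicator (player B) answers with
a vertex of the other graph, so each round produces a pair in `V0 × V1`. -/

variable {V0 V1 : Type*}

section Aux

variable {V0 V1 : Type*} {G0 : SimpleGraph V0} {G1 : SimpleGraph V1}

lemma efRounds_succ (D : DStrategy V0 V1) (σ : List (V0 × V1) → V0 ⊕ V1) (j : ℕ) :
    efRounds D σ (j+1) =
      efRounds D σ j ++ [D.resp (efRounds D σ j) (σ (efRounds D σ j))] := rfl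

lemma efRounds_length (D : DStrategy V0 V1) (σ : List (V0 × V1) → V0 ⊕ V1) (j : ℕ) :
    (efRounds D σ j).length = j := by
  induction j with
  | zero => rfl
  | succ j ih => rw [efRounds_succ, List.length_append, ih]; rfl

lemma efRounds_mem_mono (D : DStrategy V0 V1) (σ : List (V0 × V1) → V0 ⊕ V1)
    {m m' : ℕ} (h : m' ≤ m) {x : V0 × V1} (hx : x ∈ efRounds D σ m') :
    x ∈ efRounds D σ m := by
  induction m with
  | zero => simpa [Nat.le_zero.mp h] using hx
  | succ m ih =>
    rcases Nat.lt_or_ge m' (m+1) with h' | h'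
    · rw [efRounds_succ, List.mem_append]; exact Or.inl (ih (Nat.lt_succ_iff.mp h'))
    · have : m' = m + 1 := le_antisymm h h'
      subst this; exact hx

lemma partialIso_mono {L L' : List (V0 × V1)} (hsub : ∀ x ∈ L', x ∈ L)
    (h : PartialIso G0 G1 L) : PartialIso G0 G1 L' :=
  fun p hp q hq => h p (hsub p hp) q (hsub q hq)

lemma duplicatorWins_mono {m m' : ℕ} (h : m' ≤ m) (hw : DuplicatorWins G0 G1 m) :
    DuplicatorWins G0 G1 m' := by
  obtain ⟨D, hD⟩ := hw
  exact ⟨D, fun σ => partialIso_mono (fun x hx => efRounds_mem_mono D σ h hx) (hD σ)⟩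

lemma duplicatorWins_zero [Nonempty V0] [Nonempty V1] : DuplicatorWins G0 G1 0 := by
  refine ⟨⟨fun _ pick => match pick with
    | Sum.inl u => (u, Classical.arbitrary _)
    | Sum.inr w => (Classical.arbitrary _, w), fun _ _ => rfl, fun _ _ => rfl⟩,
    fun σ => ?_⟩
  intro p hp
  simp [efRounds] at hp

end Aux

-------------------------------------------------------------------------
/-! ### Duplicator's strategy -/

section Dup

abbrev Pr (n : ℕ) := Fin (n+1) × Fin (n+2)

/-- max of the first coordinates of "shift 0" pairs, and `0`. -/
def m0 {n : ℕ} : List (Pr n) → ℕ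
  | [] => 0
  | p :: L => max (if (p.2 : ℕ) = (p.1 : ℕ) then (p.1 : ℕ) else 0) (m0 L)

/-- min of the first coordinates of "shift 1" pairs, and `n`. -/
def m1 (n : ℕ) : List (Pr n) → ℕ
  | [] => n
  | p :: L => min (if (p.2 : ℕ) = (p.1 : ℕ) + 1 then (p.1 : ℕ) else n) (m1 n L)

lemma m0_append {n : ℕ} (L : List (Pr n)) (t : Pr n) :
    m0 (L ++ [t]) = max (m0 L) (if (t.2 : ℕ) = (t.1 : ℕ) then (t.1 : ℕ) else 0) := by
  induction L with
  | nil => simp only [List.nil_append, m0]; omega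
  | cons p L ih =>
    simp only [List.cons_append, m0, List.append_eq]
    rw [ih]
    omega

lemma m1_append {n : ℕ} (L : List (Pr n)) (t : Pr n) :
    m1 n (L ++ [t]) = min (m1 n L) (if (t.2 : ℕ) = (t.1 : ℕ) + 1 then (t.1 : ℕ) else n) := by
  induction L with
  | nil => simp only [List.nil_append, m1]; omega
  | cons p L ih =>
    simp only [List.cons_append, m1, List.append_eq]
    rw [ih]
    omega

lemma le_m0 {n : ℕ} {L : List (Pr n)} {p : Pr n} (hp : p ∈ L) (hs : (p.2 : ℕ) = (p.1 : ℕ)) :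
    (p.1 : ℕ) ≤ m0 L := by
  induction L with
  | nil => simp at hp
  | cons q L ih =>
    rcases List.mem_cons.mp hp with rfl | hp
    · simp only [m0]; rw [if_pos hs]; omega
    · simp only [m0]; exact le_trans (ih hp) (le_max_right _ _)

lemma m1_le {n : ℕ} {L : List (Pr n)} {p : Pr n} (hp : p ∈ L) (hs : (p.2 : ℕ) = (p.1 : ℕ) + 1) :
    m1 n L ≤ (p.1 : ℕ) := by
  induction L with
  | nil => simp at hp
  | cons q L ih =>
    rcases List.mem_cons.mp hp with rfl | hp
    · simp only [m1]; rw [if_pos hs]; omega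
    · simp only [m1]; exact le_trans (min_le_right _ _) (ih hp)

lemma m1_le_n {n : ℕ} (L : List (Pr n)) : m1 n L ≤ n := by
  induction L with
  | nil => exact le_rfl
  | cons q L ih => simp only [m1]; omega

/-- The duplicator's response function for the game of `k` rounds. -/
def dresp (n k : ℕ) (L : List (Pr n)) : Fin (n+1) ⊕ Fin (n+2) → Pr n
  | Sum.inl u =>
    if (u : ℕ) ≤ m0 L then (u, ⟨(u : ℕ), by have := u.isLt; omega⟩)
    else if m1 n L ≤ (u : ℕ) then (u, ⟨(u : ℕ) + 1, by have := u.isLt; omega⟩)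
    else if 2 ^ (k - L.length) ≤ m1 n L - (u : ℕ) then (u, ⟨(u : ℕ), by have := u.isLt; omega⟩)
    else (u, ⟨(u : ℕ) + 1, by have := u.isLt; omega⟩)
  | Sum.inr w =>
    if (w : ℕ) ≤ m0 L then (⟨min (w : ℕ) n, by omega⟩, w)
    else if m1 n L + 1 ≤ (w : ℕ) then (⟨(w : ℕ) - 1, by have := w.isLt; omega⟩, w)
    else if 2 ^ (k - L.length) ≤ m1 n L - (w : ℕ) then (⟨min (w : ℕ) n, by omega⟩, w)
    else (⟨(w : ℕ) - 1, by have := w.isLt; omega⟩, w)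

def dupStrat (n k : ℕ) : DStrategy (Fin (n+1)) (Fin (n+2)) where
  resp := dresp n k
  resp_left := by
    intro L u
    simp only [dresp]
    split_ifs <;> rfl
  resp_right := by
    intro L w
    simp only [dresp]
    split_ifs <;> rfl

/-- Invariant after `j` rounds of the `k`-round game. -/
def DInv (n k j : ℕ) (L : List (Pr n)) : Prop :=
  (∀ p ∈ L, (p.2 : ℕ) = (p.1 : ℕ) ∨ (p.2 : ℕ) = (p.1 : ℕ) + 1) ∧
    m0 L + 2 ^ (k + 1 - j) ≤ m1 n L

lemma dinv_step {n k j : ℕ} (hj : j < k) {L : List (Pr n)} (hlen : L.length = j)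
    (h : DInv n k j L) (pick : Fin (n+1) ⊕ Fin (n+2)) :
    DInv n k (j+1) (L ++ [dresp n k L pick]) := by
  obtain ⟨hsh, hgap⟩ := h
  have hMn : m1 n L ≤ n := m1_le_n L
  have hek : k + 1 - j = (k - j - 1) + 1 + 1 := by omega
  have hek2 : k + 1 - (j + 1) = (k - j - 1) + 1 := by omega
  have hkl : k - L.length = (k - j - 1) + 1 := by omega
  set e : ℕ := (k - j - 1) + 1 with he
  rw [hek] at hgap
  rw [pow_succ] at hgap
  have hpow : 0 < 2 ^ e := Nat.pow_pos (by norm_num)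
  have key : ∀ t : Pr n,
      ((t.2 : ℕ) = (t.1 : ℕ) ∨ (t.2 : ℕ) = (t.1 : ℕ) + 1) →
      (((t.2 : ℕ) = (t.1 : ℕ)) → (t.1 : ℕ) + 2 ^ e ≤ m1 n L) →
      (((t.2 : ℕ) = (t.1 : ℕ) + 1) → m0 L + 2 ^ e ≤ (t.1 : ℕ)) →
      DInv n k (j+1) (L ++ [t]) := by
    intro t hshift h0 h1
    constructor
    · intro p hp
      rcases List.mem_append.mp hp with hp | hp
      · exact hsh p hp
      · rw [List.mem_singleton.mp hp]; exact hshift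
    · rw [m0_append, m1_append, hek2]
      rcases hshift with hs | hs
      · have := h0 hs
        rw [if_pos hs, if_neg (by omega)]
        omega
      · have := h1 hs
        rw [if_neg (by omega), if_pos hs]
        omega
  cases pick with
  | inl u =>
    simp only [dresp, hkl, ← he]
    split_ifs with h1 h2 h3
    · exact key _ (Or.inl rfl) (fun _ => show (u:ℕ) + 2^e ≤ m1 n L by omega)
        (fun hc => by simp at hc)
    · exact key _ (Or.inr rfl) (fun hc => by simp at hc)
        (fun _ => show m0 L + 2^e ≤ (u:ℕ) by omega)
    · exact key _ (Or.inl rfl) (fun _ => show (u:ℕ) + 2^e ≤ m1 n L by omega)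
        (fun hc => by simp at hc)
    · exact key _ (Or.inr rfl) (fun hc => by simp at hc)
        (fun _ => show m0 L + 2^e ≤ (u:ℕ) by omega)
  | inr w =>
    have hwlt := w.isLt
    simp only [dresp, hkl, ← he]
    have hwM0 : (w : ℕ) ≤ m0 L → min (w : ℕ) n = (w : ℕ) := fun h => by
      have := m1_le_n L; omega
    split_ifs with h1 h2 h3
    · exact key _ (Or.inl (show (w:ℕ) = min (w:ℕ) n by omega))
        (fun _ => show min (w:ℕ) n + 2^e ≤ m1 n L by omega)
        (fun hc => by have hc' : (w:ℕ) = min (w:ℕ) n + 1 := hc; omega)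
    · exact key _ (Or.inr (show (w:ℕ) = ((w:ℕ) - 1) + 1 by omega))
        (fun hc => by have hc' : (w:ℕ) = (w:ℕ) - 1 := hc; omega)
        (fun _ => show m0 L + 2^e ≤ (w:ℕ) - 1 by omega)
    · exact key _ (Or.inl (show (w:ℕ) = min (w:ℕ) n by omega))
        (fun _ => show min (w:ℕ) n + 2^e ≤ m1 n L by omega)
        (fun hc => by have hc' : (w:ℕ) = min (w:ℕ) n + 1 := hc; omega)
    · exact key _ (Or.inr (show (w:ℕ) = ((w:ℕ) - 1) + 1 by omega))
        (fun hc => by have hc' : (w:ℕ) = (w:ℕ) - 1 := hc; omega)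
        (fun _ => show m0 L + 2^e ≤ (w:ℕ) - 1 by omega)

lemma dinv_run {n k : ℕ} (hn : 2 ^ (k+1) ≤ n) (σ : List (Pr n) → Fin (n+1) ⊕ Fin (n+2)) :
    ∀ j ≤ k, DInv n k j (efRounds (dupStrat n k) σ j) := by
  intro j
  induction j with
  | zero =>
    intro _
    constructor
    · intro p hp; simp [efRounds] at hp
    · show m0 ([] : List (Pr n)) + 2 ^ (k + 1 - 0) ≤ m1 n []
      simp only [m0, m1, Nat.sub_zero]
      omega
  | succ j ih =>
    intro hjk
    have hj : j < k := hjk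
    rw [efRounds_succ]
    exact dinv_step hj (efRounds_length _ _ j) (ih (le_of_lt hj)) _

lemma duplicator_wins (n k : ℕ) (hn : 2 ^ (k+1) ≤ n) :
    DuplicatorWins (pathG n) (pathG (n+1)) k := by
  refine ⟨dupStrat n k, fun σ => ?_⟩
  obtain ⟨hsh, hgap⟩ := dinv_run hn σ k le_rfl
  have hk1 : k + 1 - k = 1 := by omega
  rw [hk1, pow_one] at hgap
  set L := efRounds (dupStrat n k) σ k
  intro p hp q hq
  have h1 := hsh p hp
  have h2 := hsh q hq
  have b1 : (p.2 : ℕ) = (p.1 : ℕ) → (p.1 : ℕ) ≤ m0 L := le_m0 hp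
  have b2 : (p.2 : ℕ) = (p.1 : ℕ) + 1 → m1 n L ≤ (p.1 : ℕ) := m1_le hp
  have b3 : (q.2 : ℕ) = (q.1 : ℕ) → (q.1 : ℕ) ≤ m0 L := le_m0 hq
  have b4 : (q.2 : ℕ) = (q.1 : ℕ) + 1 → m1 n L ≤ (q.1 : ℕ) := m1_le hq
  constructor
  · rw [Fin.ext_iff, Fin.ext_iff]
    rcases h1 with hs1 | hs1 <;> rcases h2 with hs2 | hs2
    · omega
    · have := b1 hs1; have := b4 hs2; omega
    · have := b2 hs1; have := b3 hs2; omega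
    · omega
  · rw [SimpleGraph.pathGraph_adj, SimpleGraph.pathGraph_adj]
    rcases h1 with hs1 | hs1 <;> rcases h2 with hs2 | hs2
    · omega
    · have := b1 hs1; have := b4 hs2; omega
    · have := b2 hs1; have := b3 hs2; omega
    · omega

end Dup

-------------------------------------------------------------------------
/-! ### Spoiler's strategy -/

section Spoil

def mid (a b : ℕ) : ℕ := if a ≤ b then a + (b - a + 1)/2 else a - (a - b + 1)/2

lemma mid_spec (a b : ℕ) :
    Nat.dist a (mid a b) = (Nat.dist a b + 1)/2 ∧
    Nat.dist (mid a b) b = Nat.dist a b / 2 ∧ mid a b ≤ max a b := by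
  simp only [mid, Nat.dist]
  split_ifs <;> omega

def stepPair {n : ℕ} (pq : Pr n × Pr n) (t : Pr n) : Pr n × Pr n :=
  if Nat.dist (pq.1.1 : ℕ) (t.1 : ℕ) = Nat.dist (pq.1.2 : ℕ) (t.2 : ℕ) then (t, pq.2)
  else (pq.1, t)

def spoilStep {n : ℕ} (pq : Pr n × Pr n) : Fin (n+1) ⊕ Fin (n+2) :=
  if Nat.dist (pq.1.1 : ℕ) (pq.2.1 : ℕ) ≤ Nat.dist (pq.1.2 : ℕ) (pq.2.2 : ℕ) then
    Sum.inl ⟨min (mid (pq.1.1 : ℕ) (pq.2.1 : ℕ)) n, by omega⟩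
  else
    Sum.inr ⟨min (mid (pq.1.2 : ℕ) (pq.2.2 : ℕ)) (n+1), by omega⟩

def activePair {n : ℕ} : List (Pr n) → Pr n × Pr n
  | p :: q :: rest => rest.foldl stepPair (p, q)
  | _ => ((0, 0), (0, 0))

def spoil {n : ℕ} (L : List (Pr n)) : Fin (n+1) ⊕ Fin (n+2) :=
  if L.length = 0 then Sum.inr 0
  else if L.length = 1 then Sum.inr ⟨n+1, by omega⟩
  else spoilStep (activePair L)

lemma activePair_append {n : ℕ} {L : List (Pr n)} (h : 2 ≤ L.length) (t : Pr n) :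
    activePair (L ++ [t]) = stepPair (activePair L) t := by
  match L with
  | p :: q :: rest =>
    show activePair (p :: q :: (rest ++ [t])) = _
    simp only [activePair, List.foldl_append, List.foldl_cons, List.foldl_nil]

lemma violation_of_small {n : ℕ} {L : List (Pr n)} {p q : Pr n} (hp : p ∈ L) (hq : q ∈ L)
    (hne : Nat.dist (p.1 : ℕ) (q.1 : ℕ) ≠ Nat.dist (p.2 : ℕ) (q.2 : ℕ))
    (hmin : min (Nat.dist (p.1 : ℕ) (q.1 : ℕ)) (Nat.dist (p.2 : ℕ) (q.2 : ℕ)) ≤ 1) :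
    ¬ PartialIso (pathG n) (pathG (n+1)) L := by
  intro hPI
  obtain ⟨he, ha⟩ := hPI p hp q hq
  rw [Fin.ext_iff, Fin.ext_iff] at he
  rw [SimpleGraph.pathGraph_adj, SimpleGraph.pathGraph_adj] at ha
  simp only [Nat.dist] at hne hmin
  omega

def SInv (n R i : ℕ) (L : List (Pr n)) : Prop :=
  ¬ PartialIso (pathG n) (pathG (n+1)) L ∨
    ((activePair L).1 ∈ L ∧ (activePair L).2 ∈ L ∧
      Nat.dist ((activePair L).1.1 : ℕ) ((activePair L).2.1 : ℕ) ≠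
        Nat.dist ((activePair L).1.2 : ℕ) ((activePair L).2.2 : ℕ) ∧
      min (Nat.dist ((activePair L).1.1 : ℕ) ((activePair L).2.1 : ℕ))
        (Nat.dist ((activePair L).1.2 : ℕ) ((activePair L).2.2 : ℕ)) ≤ 2 ^ (R - i))

lemma sinv_step {n R i : ℕ} (hiR : i < R) (D : DStrategy (Fin (n+1)) (Fin (n+2)))
    {L : List (Pr n)} (hlen : 2 ≤ L.length) (h : SInv n R i L) :
    SInv n R (i+1) (L ++ [D.resp L (spoil L)]) := by
  set m := D.resp L (spoil L) with hm
  rcases h with hbad | ⟨hp, hq, hne, hmin⟩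
  · exact Or.inl (fun hPI => hbad (partialIso_mono (fun x hx => List.mem_append_left _ hx) hPI))
  set ap := activePair L with hapd
  set d0 := Nat.dist (ap.1.1 : ℕ) (ap.2.1 : ℕ) with hd0
  set d1 := Nat.dist (ap.1.2 : ℕ) (ap.2.2 : ℕ) with hd1
  by_cases hsmall : min d0 d1 ≤ 1
  · exact Or.inl (fun hPI => violation_of_small (List.mem_append_left _ hp)
      (List.mem_append_left _ hq) hne hsmall hPI)
  push_neg at hsmall
  right
  have hre : R - i = (R - i - 1) + 1 := by omega
  set e := R - i - 1 with hee
  have hre2 : R - (i + 1) = e := by omega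
  rw [hre, pow_succ] at hmin
  have hsp : spoil L = spoilStep ap := by
    simp only [spoil]
    rw [if_neg (by omega), if_neg (by omega)]
  have hap2 : activePair (L ++ [m]) = stepPair ap m := activePair_append hlen m
  have hmemm : m ∈ L ++ [m] := List.mem_append_right _ (List.mem_singleton.mpr rfl)
  rw [hre2]
  rcases le_or_gt d0 d1 with hside | hside
  · -- spoiler plays on the left graph
    have hd01 : d0 < d1 := lt_of_le_of_ne hside hne
    obtain ⟨hma, hmb, hmc⟩ := mid_spec (ap.1.1 : ℕ) (ap.2.1 : ℕ)
    have hzn : mid (ap.1.1 : ℕ) (ap.2.1 : ℕ) ≤ n := by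
      have h1 := ap.1.1.isLt
      have h2 := ap.2.1.isLt
      omega
    have hm1 : m.1 = (⟨min (mid (ap.1.1 : ℕ) (ap.2.1 : ℕ)) n, by omega⟩ : Fin (n+1)) := by
      rw [hm, hsp]
      show (D.resp L (spoilStep ap)).1 = _
      simp only [spoilStep]
      rw [if_pos hside]
      exact D.resp_left L _
    have hm1v : (m.1 : ℕ) = mid (ap.1.1 : ℕ) (ap.2.1 : ℕ) := by
      rw [hm1]; simp; omega
    have htri : d1 ≤ Nat.dist (ap.1.2 : ℕ) (m.2 : ℕ) + Nat.dist (m.2 : ℕ) (ap.2.2 : ℕ) :=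
      Nat.dist.triangle_inequality _ _ _
    have hda : Nat.dist (ap.1.1 : ℕ) (m.1 : ℕ) = (d0 + 1) / 2 := by rw [hm1v]; exact hma
    have hdb : Nat.dist (m.1 : ℕ) (ap.2.1 : ℕ) = d0 / 2 := by rw [hm1v]; exact hmb
    rw [hap2]
    simp only [stepPair]
    split_ifs with htest
    · -- new active pair (m, ap.2)
      refine ⟨hmemm, List.mem_append_left _ hq, ?_, ?_⟩
      · show Nat.dist (m.1 : ℕ) (ap.2.1 : ℕ) ≠ Nat.dist (m.2 : ℕ) (ap.2.2 : ℕ)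
        rw [hda] at htest
        omega
      · show min (Nat.dist (m.1 : ℕ) (ap.2.1 : ℕ)) (Nat.dist (m.2 : ℕ) (ap.2.2 : ℕ)) ≤ 2 ^ e
        rw [hdb]
        omega
    · refine ⟨List.mem_append_left _ hp, hmemm, htest, ?_⟩
      show min (Nat.dist (ap.1.1 : ℕ) (m.1 : ℕ)) (Nat.dist (ap.1.2 : ℕ) (m.2 : ℕ)) ≤ 2 ^ e
      rw [hda]
      omega
  · -- spoiler plays on the right graph
    obtain ⟨hma, hmb, hmc⟩ := mid_spec (ap.1.2 : ℕ) (ap.2.2 : ℕ)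
    have hzn : mid (ap.1.2 : ℕ) (ap.2.2 : ℕ) ≤ n + 1 := by
      have h1 := ap.1.2.isLt
      have h2 := ap.2.2.isLt
      omega
    have hm2 : m.2 = (⟨min (mid (ap.1.2 : ℕ) (ap.2.2 : ℕ)) (n+1), by omega⟩ : Fin (n+2)) := by
      rw [hm, hsp]
      show (D.resp L (spoilStep ap)).2 = _
      simp only [spoilStep]
      rw [if_neg (by omega)]
      exact D.resp_right L _
    have hm2v : (m.2 : ℕ) = mid (ap.1.2 : ℕ) (ap.2.2 : ℕ) := by
      rw [hm2]; simp; omega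
    have htri : d0 ≤ Nat.dist (ap.1.1 : ℕ) (m.1 : ℕ) + Nat.dist (m.1 : ℕ) (ap.2.1 : ℕ) :=
      Nat.dist.triangle_inequality _ _ _
    have hda : Nat.dist (ap.1.2 : ℕ) (m.2 : ℕ) = (d1 + 1) / 2 := by rw [hm2v]; exact hma
    have hdb : Nat.dist (m.2 : ℕ) (ap.2.2 : ℕ) = d1 / 2 := by rw [hm2v]; exact hmb
    rw [hap2]
    simp only [stepPair]
    split_ifs with htest
    · refine ⟨hmemm, List.mem_append_left _ hq, ?_, ?_⟩
      · show Nat.dist (m.1 : ℕ) (ap.2.1 : ℕ) ≠ Nat.dist (m.2 : ℕ) (ap.2.2 : ℕ)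
        rw [hda] at htest
        omega
      · show min (Nat.dist (m.1 : ℕ) (ap.2.1 : ℕ)) (Nat.dist (m.2 : ℕ) (ap.2.2 : ℕ)) ≤ 2 ^ e
        rw [hdb]
        omega
    · refine ⟨List.mem_append_left _ hp, hmemm, htest, ?_⟩
      show min (Nat.dist (ap.1.1 : ℕ) (m.1 : ℕ)) (Nat.dist (ap.1.2 : ℕ) (m.2 : ℕ)) ≤ 2 ^ e
      rw [hda]
      omega

lemma sinv_base {n R : ℕ} (hn : 1 ≤ n) (hnR : n ≤ 2 ^ R)
    (D : DStrategy (Fin (n+1)) (Fin (n+2))) :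
    SInv n R 0 (efRounds D spoil 2) := by
  have hs0 : spoil ([] : List (Pr n)) = Sum.inr 0 := by simp [spoil]
  have he1 : efRounds D spoil 1 = [D.resp [] (Sum.inr 0)] := by
    rw [efRounds_succ]
    show [] ++ [D.resp [] (spoil [])] = _
    rw [hs0]
    rfl
  set p1 := D.resp ([] : List (Pr n)) (Sum.inr 0) with hp1
  have hs1 : spoil [p1] = Sum.inr (⟨n+1, by omega⟩ : Fin (n+2)) := by simp [spoil]
  have he2 : efRounds D spoil 2 = [p1, D.resp [p1] (Sum.inr ⟨n+1, by omega⟩)] := by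
    rw [efRounds_succ, he1, hs1]
    rfl
  set p2 := D.resp [p1] (Sum.inr (⟨n+1, by omega⟩ : Fin (n+2))) with hp2
  have hv1 : (p1.2 : ℕ) = 0 := by
    rw [hp1, D.resp_right]
    rfl
  have hv2 : (p2.2 : ℕ) = n + 1 := by
    rw [hp2, D.resp_right]
  right
  rw [he2]
  have hapv : activePair [p1, p2] = (p1, p2) := rfl
  rw [hapv]
  refine ⟨by simp, by simp, ?_, ?_⟩
  · show Nat.dist (p1.1 : ℕ) (p2.1 : ℕ) ≠ Nat.dist (p1.2 : ℕ) (p2.2 : ℕ)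
    have h1 := p1.1.isLt
    have h2 := p2.1.isLt
    simp only [Nat.dist, hv1, hv2]
    omega
  · show min (Nat.dist (p1.1 : ℕ) (p2.1 : ℕ)) (Nat.dist (p1.2 : ℕ) (p2.2 : ℕ)) ≤ 2 ^ (R - 0)
    have h1 := p1.1.isLt
    have h2 := p2.1.isLt
    have hpow : n ≤ 2 ^ (R - 0) := by simpa using hnR
    simp only [Nat.dist]
    omega

lemma sinv_run {n R : ℕ} (hn : 1 ≤ n) (hnR : n ≤ 2 ^ R)
    (D : DStrategy (Fin (n+1)) (Fin (n+2))) :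
    ∀ i ≤ R, SInv n R i (efRounds D spoil (2 + i)) := by
  intro i
  induction i with
  | zero => intro _; exact sinv_base hn hnR D
  | succ i ih =>
    intro hiR
    have h1 : 2 + (i + 1) = (2 + i) + 1 := by omega
    rw [h1, efRounds_succ]
    exact sinv_step (by omega) D (by rw [efRounds_length]; omega) (ih (by omega))

lemma spoiler_wins {n : ℕ} (hn : 1 ≤ n) :
    ¬ DuplicatorWins (pathG n) (pathG (n+1)) (Nat.clog 2 n + 2) := by
  rintro ⟨D, hD⟩
  have hPI := hD spoil
  set R := Nat.clog 2 n with hR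
  have hnR : n ≤ 2 ^ R := Nat.le_pow_clog (by norm_num) n
  have harith : R + 2 = 2 + R := by omega
  rw [harith] at hPI
  rcases sinv_run hn hnR D R le_rfl with hbad | ⟨hp, hq, hne, hmin⟩
  · exact hbad hPI
  · rw [Nat.sub_self, pow_zero] at hmin
    exact violation_of_small hp hq hne hmin hPI

end Spoil


-------------------------------------------------------------------------
/-! ### Putting things together -/

section Final

lemma enat_coe_eq (m : ℕ) : enatToEReal (m : ℕ∞) = ((m : ℝ) : EReal) := rfl

lemma enat_mono {a b : ℕ∞} (h : a ≤ b) : enatToEReal a ≤ enatToEReal b := by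
  induction a using ENat.recTopCoe with
  | top =>
    have hb : b = ⊤ := top_le_iff.mp h
    subst hb; exact le_refl _
  | coe a =>
    induction b using ENat.recTopCoe with
    | top => exact le_top
    | coe b =>
      have hab : a ≤ b := by exact_mod_cast h
      show ((a : ℝ) : EReal) ≤ ((b : ℝ) : EReal)
      exact_mod_cast hab

lemma lEF_ge {V0 V1 : Type*} {G0 : SimpleGraph V0} {G1 : SimpleGraph V1} {m : ℕ}
    (h : DuplicatorWins G0 G1 m) : (m : ℕ∞) ≤ lEF G0 G1 :=
  le_sSup ⟨m, h, rfl⟩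

lemma lEF_le {V0 V1 : Type*} {G0 : SimpleGraph V0} {G1 : SimpleGraph V1} {M : ℕ}
    (h : ¬ DuplicatorWins G0 G1 (M + 1)) : lEF G0 G1 ≤ (M : ℕ∞) := by
  apply sSup_le
  rintro k ⟨m, hm, rfl⟩
  have hmM : m ≤ M := by
    by_contra hc
    push_neg at hc
    exact h (duplicatorWins_mono (by omega) hm)
  exact_mod_cast hmM

lemma logb_lt_log_succ {n : ℕ} (hn : 1 ≤ n) :
    Real.logb 2 n < (Nat.log 2 n : ℝ) + 1 := by
  have h := Nat.lt_pow_succ_log_self (b := 2) (by norm_num) n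
  have h' : (n : ℝ) < (2 : ℝ) ^ (Nat.log 2 n + 1) := by exact_mod_cast h
  have hpos : (0 : ℝ) < n := by exact_mod_cast hn
  calc Real.logb 2 n < Real.logb 2 ((2 : ℝ) ^ (Nat.log 2 n + 1)) :=
        Real.logb_lt_logb (by norm_num) hpos h'
    _ = (Nat.log 2 n + 1 : ℕ) * Real.logb 2 2 := by rw [Real.logb_pow]
    _ = (Nat.log 2 n : ℝ) + 1 := by
        rw [Real.logb_self_eq_one (by norm_num)]
        push_cast
        ring

lemma clog_lt_logb_succ {n : ℕ} (hn : 1 ≤ n) :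
    (Nat.clog 2 n : ℝ) < Real.logb 2 n + 1 := by
  rcases eq_or_lt_of_le hn with h1 | h1
  · rw [← h1]
    simp [Nat.clog_one_right]
  · have h2 : 2 ≤ n := h1
    have hc1 : 1 ≤ Nat.clog 2 n := Nat.clog_pos (by norm_num) h2
    have h := Nat.pow_pred_clog_lt_self (b := 2) (by norm_num) (x := n) h1
    have h' : (2 : ℝ) ^ (Nat.clog 2 n - 1) < (n : ℝ) := by exact_mod_cast h
    have hpow : (0 : ℝ) < (2 : ℝ) ^ (Nat.clog 2 n - 1) := by positivity
    have hlt : Real.logb 2 ((2 : ℝ) ^ (Nat.clog 2 n - 1)) < Real.logb 2 n :=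
      Real.logb_lt_logb (by norm_num) hpow h'
    rw [Real.logb_pow, Real.logb_self_eq_one (by norm_num), mul_one] at hlt
    have hcast : ((Nat.clog 2 n - 1 : ℕ) : ℝ) = (Nat.clog 2 n : ℝ) - 1 := by
      push_cast [Nat.cast_sub hc1]
      ring
    rw [hcast] at hlt
    linarith

theorem statement3' (n : ℕ) (hn : 1 ≤ n) :
    ((Real.logb 2 n - 2 : ℝ) : EReal) < enatToEReal (lEF (pathG n) (pathG (n + 1))) ∧
      enatToEReal (lEF (pathG n) (pathG (n + 1))) < ((Real.logb 2 n + 2 : ℝ) : EReal) := by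
  constructor
  · -- lower bound
    by_cases h4 : n ≤ 3
    · have hw : DuplicatorWins (pathG n) (pathG (n+1)) 0 := duplicatorWins_zero
      have h1 := enat_mono (lEF_ge hw)
      rw [enat_coe_eq] at h1
      refine lt_of_lt_of_le ?_ h1
      rw [show ((0 : ℕ) : ℝ) = (0 : ℝ) by norm_num]
      apply EReal.coe_lt_coe_iff.mpr
      have hlog : Nat.log 2 n ≤ 1 := by
        have := Nat.log_lt_of_lt_pow (show n ≠ 0 by omega) (show n < 2 ^ 2 by omega)
        omega
      have := logb_lt_log_succ hn
      have hc : (Nat.log 2 n : ℝ) ≤ 1 := by exact_mod_cast hlog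
      linarith
    · push_neg at h4
      set g := Nat.log 2 n with hg
      have hg1 : 1 ≤ g := by
        have := (Nat.le_log_iff_pow_le (b := 2) (by norm_num) (show n ≠ 0 by omega)).mpr
          (show 2 ^ 1 ≤ n by omega)
        omega
      have hpow : 2 ^ ((g - 1) + 1) ≤ n := by
        have h := Nat.pow_log_le_self 2 (show n ≠ 0 by omega)
        have : (g - 1) + 1 = g := by omega
        rw [this]
        exact h
      have hw : DuplicatorWins (pathG n) (pathG (n+1)) (g - 1) :=
        duplicator_wins n (g - 1) hpow
      have h1 := enat_mono (lEF_ge hw)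
      rw [enat_coe_eq] at h1
      refine lt_of_lt_of_le ?_ h1
      apply EReal.coe_lt_coe_iff.mpr
      have hlog := logb_lt_log_succ hn
      have hc : ((g - 1 : ℕ) : ℝ) = (g : ℝ) - 1 := by
        push_cast [Nat.cast_sub hg1]
        ring
      rw [hc]
      linarith
  · -- upper bound
    have h1 := enat_mono (lEF_le (M := Nat.clog 2 n + 1) (spoiler_wins hn))
    rw [enat_coe_eq] at h1
    refine lt_of_le_of_lt h1 ?_
    apply EReal.coe_lt_coe_iff.mpr
    have := clog_lt_logb_succ hn
    push_cast
    linarith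

end Final

/-- For every `n ≥ 1`, `log n − 2 < l_EF(P n, P (n+1)) < log n + 2`. -/
theorem statement3 (n : ℕ) (hn : 1 ≤ n) :
    ((Real.logb 2 n - 2 : ℝ) : EReal) < enatToEReal (lEF (pathG n) (pathG (n + 1))) ∧
      enatToEReal (lEF (pathG n) (pathG (n + 1))) < ((Real.logb 2 n + 2 : ℝ) : EReal) :=
  statement3' n hn

end SymPaper
end
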